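/- Let n be a non-negative integer, let β be a complex number that is not a negative integer, and let x be a complex number. Then ∑_{k=0}^{n} C(n,k) · C(β+k, k) · x^k = ∑_{k=0}^{n} (−1)^{n+k} · C(n,k) · C(β+k, n) · (1+x)^k. -/

import Mathlib

/-!
Expand `(1 + x) ^ k` on the right. With `m = n - j`, the identity
`C(n,k) C(k,j) = C(n,j) C(m,k-j)` turns the coefficient of `x ^ j` into `C(n,j)` times the
`m`-th forward difference of `z ↦ C(z, j + m)` at `β + j`. By Pascal's rule that difference is
`C(β + j, j)`, which is the coefficient of `x ^ j` on the left.
-/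

open Finset

/-- Generalized binomial coefficient `C(z,k) = z(z-1)⋯(z-k+1)/k!`. -/
noncomputable def cchoose (z : ℂ) (k : ℕ) : ℂ :=
  (∏ i ∈ Finset.range k, (z - i)) / (k.factorial : ℂ)

theorem cchoose_eq_choose (z : ℂ) (k : ℕ) : cchoose z k = Ring.choose z k := by
  rw [Ring.choose_eq_smul, cchoose, ← descPochhammer_eval_eq_prod_range,
    ← Polynomial.aeval_eq_smeval, Polynomial.aeval_def, Polynomial.eval₂_eq_eval_map,
    descPochhammer_map, smul_eq_mul, div_eq_inv_mul]

theorem one_add_pow_eq_sum_range {R : Type*} [CommSemiring R] (x : R) {k n : ℕ} (hkn : k ≤ n) :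
    (1 + x) ^ k = ∑ j ∈ range (n + 1), x ^ j * k.choose j := by
  rw [add_comm, add_pow]
  simp only [one_pow, mul_one]
  refine sum_subset (range_subset_range.mpr (by omega)) fun j _ hj ↦ ?_
  simp [Nat.choose_eq_zero_of_lt (by simpa using hj : k < j)]

namespace Ring

open fwdDiff

variable {R : Type*} [CommRing R] [BinomialRing R]

theorem fwdDiff_iter_choose (j m : ℕ) :
    (Δ_[(1 : R)])^[m] (fun r ↦ choose r (m + j)) = fun r ↦ choose r j := by
  induction m with
  | zero => simp
  | succ m ih =>
    rw [Function.iterate_succ_apply, ← ih]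
    congr 1
    ext r
    rw [fwdDiff, add_right_comm, choose_succ_succ, add_sub_cancel_right]

theorem sum_neg_one_pow_mul_choose_mul_choose_add (y : R) (j m : ℕ) :
    ∑ i ∈ range (m + 1), (-1 : R) ^ (m + i) * m.choose i * choose (y + i) (m + j) =
      choose y j := by
  rw [← congrFun (fwdDiff_iter_choose j m) y, fwdDiff_iter_eq_sum_shift]
  refine sum_congr rfl fun i hi ↦ ?_
  have hsign : (-1 : R) ^ (m + i) = (-1) ^ (m - i) := by
    rw [← Nat.sub_add_cancel (mem_range_succ_iff.mp hi), add_assoc, pow_add, ← two_mul, pow_mul]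
    simp
  rw [hsign, zsmul_eq_mul, nsmul_one]
  push_cast
  ring

theorem sum_neg_one_pow_mul_choose_mul_choose_mul_choose (y : R) {j n : ℕ} (hjn : j ≤ n) :
    ∑ k ∈ range (n + 1), (-1 : R) ^ (n + k) * n.choose k * k.choose j * choose (y + k) n =
      n.choose j * choose (y + j) j := by
  obtain ⟨m, rfl⟩ := Nat.exists_eq_add_of_le hjn
  rw [show j + m + 1 = j + (m + 1) by ring, sum_range_add,
    sum_eq_zero fun k hk ↦ by simp [Nat.choose_eq_zero_of_lt (mem_range.mp hk)], zero_add,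
    ← sum_neg_one_pow_mul_choose_mul_choose_add (y + j) j m, mul_sum]
  refine sum_congr rfl fun i _ ↦ ?_
  have hsign : (-1 : R) ^ (j + m + (j + i)) = (-1) ^ (m + i) := by
    rw [show j + m + (j + i) = m + i + 2 * j by ring, pow_add, pow_mul]
    simp
  have hchoose := Nat.choose_mul (n := j + m) (Nat.le_add_right j i)
  rw [Nat.add_sub_cancel_left, Nat.add_sub_cancel_left] at hchoose
  rw [hsign, mul_assoc _ ((j + m).choose (j + i) : R), ← Nat.cast_mul, hchoose, Nat.cast_mul,
    add_comm m j]
  push_cast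
  rw [← add_assoc]
  ring

end Ring

theorem stmt_5_general (n : ℕ) (β x : ℂ) :
    ∑ k ∈ range (n + 1), (n.choose k : ℂ) * cchoose (β + k) k * x ^ k =
      ∑ k ∈ range (n + 1), (-1 : ℂ) ^ (n + k) * (n.choose k : ℂ) *
        cchoose (β + k) n * (1 + x) ^ k := by
  simp only [cchoose_eq_choose]
  calc _ = ∑ j ∈ range (n + 1), ∑ k ∈ range (n + 1),
          (-1 : ℂ) ^ (n + k) * n.choose k * k.choose j * Ring.choose (β + k) n * x ^ j :=
        sum_congr rfl fun j hj ↦ by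
          rw [← sum_mul, Ring.sum_neg_one_pow_mul_choose_mul_choose_mul_choose β
            (mem_range_succ_iff.mp hj)]
    _ = _ := by
      rw [sum_comm]
      refine sum_congr rfl fun k hk ↦ ?_
      rw [one_add_pow_eq_sum_range x (mem_range_succ_iff.mp hk), mul_sum]
      exact sum_congr rfl fun j _ ↦ by ring

theorem stmt_5 (n : ℕ) (β x : ℂ) (hβ : ∀ m : ℕ, β ≠ -((m : ℂ) + 1)) :
    ∑ k ∈ range (n + 1), (n.choose k : ℂ) * cchoose (β + k) k * x ^ k =
      ∑ k ∈ range (n + 1), (-1 : ℂ) ^ (n + k) * (n.choose k : ℂ) *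
        cchoose (β + k) n * (1 + x) ^ k :=
  stmt_5_general n β x
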